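/- arXiv:2603.17650 — 5 statements merged into one kernel-verified Lean document; each statement's English description precedes it below -/
import Mathlib

section
/- Let m ≥ 1, let f : ℝ^m → ℝ be smooth, and let v : ℝ^m → ℝ be smooth with compact support. Then the function F(t) = ∫_{ℝ^m} ( ‖∇(f+tv)(x)‖⁴ − ‖∇f(x)‖⁴ ) dx is well defined (the integrand is compactly supported for each t), F is differentiable at t = 0, and F'(0) = −4 ∫_{ℝ^m} v(x) · div(‖∇f‖²∇f)(x) dx. -/
open scoped BigOperators

/-- Partial derivative `∂f/∂x_i` of a scalar function on `ℝ^m`. -/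
noncomputable def pd1 {m : ℕ} (f : (Fin m → ℝ) → ℝ) (i : Fin m) (x : Fin m → ℝ) : ℝ :=
  fderiv ℝ f x (Pi.single i 1)

/-!
Since `∇(f + t v) = ∇f + t ∇v`, the integrand is a polynomial in `t` without constant term,
`‖∇f‖⁴` cancelling. Its coefficients are continuous and vanish off the support of `v`, so `F` is a
polynomial whose derivative at `0` is the integral of the linear coefficient
`4 ‖∇f‖² ⟨∇f, ∇v⟩ = 4 ⟨σ_f, ∇v⟩`. Integrating by parts in each coordinate direction, with no
boundary terms because `v` has compact support, turns this into `-4 ∫ v div σ_f`.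
-/

open MeasureTheory

theorem hasDerivAt_integral_sum_pow_succ_mul {α : Type*} [MeasurableSpace α] {μ : Measure α}
    {n : ℕ} {c : Fin (n + 1) → α → ℝ} (hc : ∀ k, Integrable (c k) μ) :
    HasDerivAt (fun t : ℝ => ∫ x, ∑ k : Fin (n + 1), t ^ ((k : ℕ) + 1) * c k x ∂μ)
      (∫ x, c 0 x ∂μ) 0 := by
  have hpoly : (fun t : ℝ => ∫ x, ∑ k : Fin (n + 1), t ^ ((k : ℕ) + 1) * c k x ∂μ)
      = fun t => ∑ k : Fin (n + 1), t ^ ((k : ℕ) + 1) * ∫ x, c k x ∂μ := by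
    funext t
    rw [integral_finsetSum _ fun k _ => (hc k).const_mul _]
    simp only [integral_const_mul]
  rw [hpoly]
  refine (HasDerivAt.fun_sum (u := Finset.univ) fun (k : Fin (n + 1)) _ =>
    (hasDerivAt_pow ((k : ℕ) + 1) (0 : ℝ)).mul_const (∫ x, c k x ∂μ)).congr_deriv ?_
  simp [Fin.sum_univ_succ]

section

variable {m : ℕ}

theorem continuous_pd1 {f : (Fin m → ℝ) → ℝ} (hf : ContDiff ℝ 1 f) (i : Fin m) :
    Continuous (pd1 f i) :=
  (hf.continuous_fderiv one_ne_zero).clm_apply continuous_const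

theorem contDiff_pd1 {n : WithTop ℕ∞} {f : (Fin m → ℝ) → ℝ} (hf : ContDiff ℝ (n + 1) f)
    (i : Fin m) : ContDiff ℝ n (pd1 f i) :=
  (hf.fderiv_right le_rfl).clm_apply contDiff_const

theorem pd1_eq_zero_of_notMem_tsupport {f : (Fin m → ℝ) → ℝ} (i : Fin m) {x : Fin m → ℝ}
    (hx : x ∉ tsupport f) : pd1 f i x = 0 := by
  simp [pd1, fderiv_of_notMem_tsupport ℝ hx]

theorem HasCompactSupport.pd1 {f : (Fin m → ℝ) → ℝ} (hf : HasCompactSupport f) (i : Fin m) :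
    HasCompactSupport (pd1 f i) :=
  hf.fderiv_apply ℝ _

theorem pd1_add_const_mul {f v : (Fin m → ℝ) → ℝ} {x : Fin m → ℝ} (hf : DifferentiableAt ℝ f x)
    (hv : DifferentiableAt ℝ v x) (t : ℝ) (i : Fin m) :
    pd1 (fun y => f y + t * v y) i x = pd1 f i x + t * pd1 v i x := by
  simp [pd1, fderiv_fun_add hf (hv.const_mul t), fderiv_const_mul hv]

noncomputable def gradNormSq (f : (Fin m → ℝ) → ℝ) (x : Fin m → ℝ) : ℝ := ∑ i, pd1 f i x ^ 2

noncomputable def gradInner (f g : (Fin m → ℝ) → ℝ) (x : Fin m → ℝ) : ℝ :=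
  ∑ i, pd1 f i x * pd1 g i x

noncomputable def symphonicStress (f : (Fin m → ℝ) → ℝ) (i : Fin m) (x : Fin m → ℝ) : ℝ :=
  gradNormSq f x * pd1 f i x

theorem gradNormSq_add_const_mul {f v : (Fin m → ℝ) → ℝ} {x : Fin m → ℝ}
    (hf : DifferentiableAt ℝ f x) (hv : DifferentiableAt ℝ v x) (t : ℝ) :
    gradNormSq (fun y => f y + t * v y) x
      = gradNormSq f x + 2 * t * gradInner f v x + t ^ 2 * gradNormSq v x := by
  simp only [gradNormSq, gradInner, pd1_add_const_mul hf hv, Finset.mul_sum,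
    ← Finset.sum_add_distrib]
  exact Finset.sum_congr rfl fun i _ => by ring

theorem continuous_gradNormSq {f : (Fin m → ℝ) → ℝ} (hf : ContDiff ℝ 1 f) :
    Continuous (gradNormSq f) :=
  continuous_finsetSum _ fun i _ => (continuous_pd1 hf i).pow 2

theorem continuous_gradInner {f g : (Fin m → ℝ) → ℝ} (hf : ContDiff ℝ 1 f) (hg : ContDiff ℝ 1 g) :
    Continuous (gradInner f g) :=
  continuous_finsetSum _ fun i _ => (continuous_pd1 hf i).mul (continuous_pd1 hg i)

theorem gradNormSq_eq_zero_of_notMem_tsupport {f : (Fin m → ℝ) → ℝ} {x : Fin m → ℝ}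
    (hx : x ∉ tsupport f) : gradNormSq f x = 0 := by
  simp [gradNormSq, pd1_eq_zero_of_notMem_tsupport _ hx]

theorem gradInner_eq_zero_of_notMem_tsupport (f : (Fin m → ℝ) → ℝ) {g : (Fin m → ℝ) → ℝ}
    {x : Fin m → ℝ} (hx : x ∉ tsupport g) : gradInner f g x = 0 := by
  simp [gradInner, pd1_eq_zero_of_notMem_tsupport _ hx]

theorem gradNormSq_mul_gradInner (f g : (Fin m → ℝ) → ℝ) (x : Fin m → ℝ) :
    gradNormSq f x * gradInner f g x = ∑ i, symphonicStress f i x * pd1 g i x := by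
  simp only [gradInner, symphonicStress, Finset.mul_sum, mul_assoc]

theorem contDiff_symphonicStress {n : WithTop ℕ∞} {f : (Fin m → ℝ) → ℝ}
    (hf : ContDiff ℝ (n + 1) f) (i : Fin m) : ContDiff ℝ n (symphonicStress f i) :=
  (ContDiff.sum fun j _ => (contDiff_pd1 hf j).pow 2).mul (contDiff_pd1 hf i)

noncomputable def symphonicVariationCoeff (f v : (Fin m → ℝ) → ℝ) :
    Fin 4 → (Fin m → ℝ) → ℝ :=
  ![fun x => 4 * (gradNormSq f x * gradInner f v x),
    fun x => 4 * gradInner f v x ^ 2 + 2 * gradNormSq f x * gradNormSq v x,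
    fun x => 4 * gradInner f v x * gradNormSq v x,
    fun x => gradNormSq v x ^ 2]

theorem gradNormSq_add_const_mul_sq_sub {f v : (Fin m → ℝ) → ℝ} {x : Fin m → ℝ}
    (hf : DifferentiableAt ℝ f x) (hv : DifferentiableAt ℝ v x) (t : ℝ) :
    gradNormSq (fun y => f y + t * v y) x ^ 2 - gradNormSq f x ^ 2
      = ∑ k : Fin 4, t ^ ((k : ℕ) + 1) * symphonicVariationCoeff f v k x := by
  rw [gradNormSq_add_const_mul hf hv, Fin.sum_univ_four]
  simp only [symphonicVariationCoeff, Matrix.cons_val, Fin.coe_ofNat_eq_mod, Nat.reduceMod]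
  ring

theorem continuous_symphonicVariationCoeff {f v : (Fin m → ℝ) → ℝ} (hf : ContDiff ℝ 1 f)
    (hv : ContDiff ℝ 1 v) (k : Fin 4) : Continuous (symphonicVariationCoeff f v k) := by
  have hA := continuous_gradNormSq hf
  have hB := continuous_gradInner hf hv
  have hC := continuous_gradNormSq hv
  fin_cases k <;> simp only [symphonicVariationCoeff, Fin.reduceFinMk, Matrix.cons_val] <;> fun_prop

theorem symphonicVariationCoeff_eq_zero_of_notMem_tsupport (f : (Fin m → ℝ) → ℝ)
    {v : (Fin m → ℝ) → ℝ} (k : Fin 4) {x : Fin m → ℝ} (hx : x ∉ tsupport v) :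
    symphonicVariationCoeff f v k x = 0 := by
  fin_cases k <;> simp [symphonicVariationCoeff, gradInner_eq_zero_of_notMem_tsupport f hx,
    gradNormSq_eq_zero_of_notMem_tsupport hx]

theorem symphonicVariationCoeff_zero (f v : (Fin m → ℝ) → ℝ) (x : Fin m → ℝ) :
    symphonicVariationCoeff f v 0 x = 4 * ∑ i, symphonicStress f i x * pd1 v i x := by
  simp [symphonicVariationCoeff, gradNormSq_mul_gradInner]

theorem integral_mul_pd1_eq_neg_integral_pd1_mul {g v : (Fin m → ℝ) → ℝ} (hg : ContDiff ℝ 1 g)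
    (hv : ContDiff ℝ 1 v) (hvs : HasCompactSupport v) (i : Fin m) :
    ∫ x, g x * pd1 v i x = -∫ x, pd1 g i x * v x :=
  integral_mul_fderiv_eq_neg_fderiv_mul_of_integrable
    (((continuous_pd1 hg i).mul hv.continuous).integrable_of_hasCompactSupport hvs.mul_left)
    ((hg.continuous.mul (continuous_pd1 hv i)).integrable_of_hasCompactSupport
      (hvs.pd1 i).mul_left)
    ((hg.continuous.mul hv.continuous).integrable_of_hasCompactSupport hvs.mul_left)
    (fun x _ => hg.differentiable one_ne_zero x) (fun x _ => hv.differentiable one_ne_zero x)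

theorem integral_sum_mul_pd1_eq_neg_integral_mul_div {σ : Fin m → (Fin m → ℝ) → ℝ}
    {v : (Fin m → ℝ) → ℝ} (hσ : ∀ i, ContDiff ℝ 1 (σ i)) (hv : ContDiff ℝ 1 v)
    (hvs : HasCompactSupport v) :
    ∫ x, ∑ i, σ i x * pd1 v i x = -∫ x, v x * ∑ i, pd1 (σ i) i x := by
  simp only [Finset.mul_sum]
  rw [integral_finsetSum _ fun i _ => ?_, integral_finsetSum _ fun i _ => ?_,
    ← Finset.sum_neg_distrib]
  · refine Finset.sum_congr rfl fun i _ => ?_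
    simp only [integral_mul_pd1_eq_neg_integral_pd1_mul (hσ i) hv hvs, mul_comm]
  · exact (hv.continuous.mul (continuous_pd1 (hσ i) i)).integrable_of_hasCompactSupport
      hvs.mul_right
  · exact ((hσ i).continuous.mul (continuous_pd1 hv i)).integrable_of_hasCompactSupport
      (hvs.pd1 i).mul_left

end

theorem symphonic_first_variation_scalar_general (m : ℕ) (f v : (Fin m → ℝ) → ℝ)
    (hf : ContDiff ℝ (⊤ : ℕ∞) f) (hv : ContDiff ℝ (⊤ : ℕ∞) v) (hvs : HasCompactSupport v) :
    (∀ t : ℝ, HasCompactSupport fun x =>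
        (∑ i, pd1 (fun y => f y + t * v y) i x ^ 2) ^ 2 - (∑ i, pd1 f i x ^ 2) ^ 2)
      ∧ HasDerivAt (fun t : ℝ => ∫ x : Fin m → ℝ,
            ((∑ i, pd1 (fun y => f y + t * v y) i x ^ 2) ^ 2 - (∑ i, pd1 f i x ^ 2) ^ 2))
          (-4 * ∫ x : Fin m → ℝ,
            v x * ∑ i, pd1 (fun y => (∑ j, pd1 f j y ^ 2) * pd1 f i y) i x) 0 := by
  have hf2 : ContDiff ℝ (1 + 1) f := hf.of_le (WithTop.coe_le_coe.2 le_top)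
  have hv1 : ContDiff ℝ 1 v := hv.of_le (WithTop.coe_le_coe.2 le_top)
  have hf1 : ContDiff ℝ 1 f := hf2.of_le le_add_self
  have hexpand := fun t x => gradNormSq_add_const_mul_sq_sub
    (hf1.differentiable one_ne_zero x) (hv1.differentiable one_ne_zero x) t
  have hcoeff : ∀ k, Integrable (symphonicVariationCoeff f v k) := fun k =>
    (continuous_symphonicVariationCoeff hf1 hv1 k).integrable_of_hasCompactSupport
      (HasCompactSupport.intro hvs fun _ hx =>
        symphonicVariationCoeff_eq_zero_of_notMem_tsupport f k hx)
  refine ⟨fun t => HasCompactSupport.intro hvs fun x hx => ?_, ?_⟩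
  · change gradNormSq _ x ^ 2 - gradNormSq f x ^ 2 = 0
    simp [hexpand t x, symphonicVariationCoeff_eq_zero_of_notMem_tsupport f _ hx]
  · have hval : ∫ x, symphonicVariationCoeff f v 0 x
        = -4 * ∫ x, v x * ∑ i, pd1 (symphonicStress f i) i x := by
      simp only [symphonicVariationCoeff_zero, integral_const_mul,
        integral_sum_mul_pd1_eq_neg_integral_mul_div (contDiff_symphonicStress hf2) hv1 hvs]
      ring
    have hderiv := hasDerivAt_integral_sum_pow_succ_mul (μ := volume) hcoeff
    simp only [← hexpand] at hderiv
    exact hderiv.congr_deriv hval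

/-- First variation of the symphonic energy of a scalar function: for smooth `f` and smooth
compactly supported `v`, the function `F(t) = ∫ (‖∇(f+tv)‖⁴ − ‖∇f‖⁴)` has compactly supported
integrand for each `t`, and is differentiable at `t = 0` with
`F'(0) = −4 ∫ v · div(‖∇f‖²∇f)`. -/
theorem symphonic_first_variation_scalar (m : ℕ) (hm : 1 ≤ m) (f v : (Fin m → ℝ) → ℝ)
    (hf : ContDiff ℝ (⊤ : ℕ∞) f) (hv : ContDiff ℝ (⊤ : ℕ∞) v) (hvs : HasCompactSupport v) :
    (∀ t : ℝ, HasCompactSupport fun x =>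
        (∑ i, pd1 (fun y => f y + t * v y) i x ^ 2) ^ 2 - (∑ i, pd1 f i x ^ 2) ^ 2)
      ∧ HasDerivAt (fun t : ℝ => ∫ x : Fin m → ℝ,
            ((∑ i, pd1 (fun y => f y + t * v y) i x ^ 2) ^ 2 - (∑ i, pd1 f i x ^ 2) ^ 2))
          (-4 * ∫ x : Fin m → ℝ,
            v x * ∑ i, pd1 (fun y => (∑ j, pd1 f j y ^ 2) * pd1 f i y) i x) 0 :=
  symphonic_first_variation_scalar_general m f v hf hv hvs
end

section
/- Let f : ℝ² \ {0} → ℝ be given by f(x₁,x₂) = (x₁² + x₂²)^{1/3}. Then f is smooth on ℝ² \ {0} and satisfies the symphonic equation there: for every x ≠ 0, ∑_{i,j=1}^{2} [ (∂²f/∂x_i²)(x)·(∂f/∂x_j)(x)² + 2·(∂f/∂x_i)(x)·(∂f/∂x_j)(x)·(∂²f/∂x_i∂x_j)(x) ] = 0. -/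
/-! For `f = q ^ p` with `q = ∑ xᵢ²` one has `∂ᵢf = 2p q^(p-1) xᵢ` and
`∂ⱼ∂ᵢf = 2p (δᵢⱼ q^(p-1) + 2(p-1) xᵢxⱼ q^(p-2))`, so the symphonic expression collapses to
`8p³ (6p + m - 4) q^(3p-2)` on `ℝᵐ \ {0}`. It vanishes for `p = (4 - m)/6`, i.e. `p = 1/3` when
`m = 2`. -/

open scoped BigOperators

open ContinuousLinearMap

variable {m : ℕ}

noncomputable def symphonicOperator (f : (Fin m → ℝ) → ℝ) (x : Fin m → ℝ) : ℝ :=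
  ∑ i, ∑ j, (pd1 (pd1 f i) i x * pd1 f j x ^ 2 + 2 * pd1 f i x * pd1 f j x * pd1 (pd1 f i) j x)

def sumSq (y : Fin m → ℝ) : ℝ := ∑ i, y i ^ 2

lemma sumSq_pos {x : Fin m → ℝ} (hx : x ≠ 0) : 0 < sumSq x := by
  obtain ⟨i, hi⟩ := Function.ne_iff.mp hx
  exact Finset.sum_pos' (fun j _ => sq_nonneg (x j)) ⟨i, Finset.mem_univ i, sq_pos_of_ne_zero hi⟩

lemma hasFDerivAt_sumSq (x : Fin m → ℝ) :
    HasFDerivAt sumSq (∑ i, (2 * x i) • proj i : (Fin m → ℝ) →L[ℝ] ℝ) x := by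
  refine (HasFDerivAt.fun_sum (u := Finset.univ) fun i _ =>
    (hasFDerivAt_apply (𝕜 := ℝ) i x).pow 2).congr_fderiv ?_
  simp

lemma hasFDerivAt_sumSq_rpow (p : ℝ) {x : Fin m → ℝ} (hx : x ≠ 0) :
    HasFDerivAt (fun y => sumSq y ^ p)
      ((p * sumSq x ^ (p - 1)) • ∑ i, (2 * x i) • proj i : (Fin m → ℝ) →L[ℝ] ℝ) x :=
  (hasFDerivAt_sumSq x).rpow_const (Or.inl (sumSq_pos hx).ne')

lemma pd1_sumSq_rpow (p : ℝ) {x : Fin m → ℝ} (hx : x ≠ 0) (i : Fin m) :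
    pd1 (fun y => sumSq y ^ p) i x = 2 * p * x i * sumSq x ^ (p - 1) := by
  rw [pd1, (hasFDerivAt_sumSq_rpow p hx).fderiv]
  simp only [smul_apply, sum_apply, proj_apply, Pi.single_apply, smul_eq_mul, mul_ite, mul_one,
    mul_zero, Finset.sum_ite_eq', Finset.mem_univ, if_true]
  ring

lemma pd1_pd1_sumSq_rpow (p : ℝ) {x : Fin m → ℝ} (hx : x ≠ 0) (i j : Fin m) :
    pd1 (pd1 (fun y => sumSq y ^ p) i) j x =
      2 * p * ((if i = j then 1 else 0) * sumSq x ^ (p - 1)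
        + 2 * (p - 1) * x i * x j * sumSq x ^ (p - 2)) := by
  have hloc : pd1 (fun y => sumSq y ^ p) i =ᶠ[nhds x] fun y => 2 * p * y i * sumSq y ^ (p - 1) :=
    Filter.eventuallyEq_of_mem (isOpen_compl_singleton.mem_nhds hx)
      fun y hy => pd1_sumSq_rpow p hy i
  have hderiv := ((hasFDerivAt_apply (𝕜 := ℝ) i x).const_mul (2 * p)).fun_mul
    (hasFDerivAt_sumSq_rpow (p - 1) hx)
  rw [pd1, hloc.fderiv_eq, hderiv.fderiv, sub_sub, one_add_one_eq_two]
  simp only [add_apply, smul_apply, sum_apply, proj_apply, Pi.single_apply, eq_comm, smul_eq_mul,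
    mul_ite, mul_one, mul_zero, Finset.sum_ite_eq, Finset.mem_univ, if_true]
  split_ifs <;> ring

lemma sum_sum_quadratic (x : Fin m → ℝ) (c₁ c₂ c₃ : ℝ) :
    ∑ i, ∑ j, (c₁ * x j ^ 2 + c₂ * (x i ^ 2 * x j ^ 2) + c₃ * (if i = j then x i ^ 2 else 0)) =
      (c₁ * m + c₃) * sumSq x + c₂ * sumSq x ^ 2 := by
  simp only [Finset.sum_add_distrib, ← Finset.mul_sum, Finset.sum_ite_eq, Finset.mem_univ, if_true,
    ← Finset.sum_mul, Finset.sum_const, Finset.card_univ, Fintype.card_fin, nsmul_eq_mul, sumSq]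
  ring

lemma symphonicOperator_sumSq_rpow (p : ℝ) {x : Fin m → ℝ} (hx : x ≠ 0) :
    symphonicOperator (fun y => sumSq y ^ p) x =
      8 * p ^ 3 * (6 * p + m - 4) * sumSq x ^ (3 * p - 2) := by
  have hq := sumSq_pos hx
  set q := sumSq x with hq_def
  have hpred : q ^ (p - 2) * q = q ^ (p - 1) := by
    rw [← Real.rpow_add_one hq.ne']; ring_nf
  have hcube : (q ^ (p - 1)) ^ 3 * q = q ^ (3 * p - 2) := by
    rw [← Real.rpow_mul_natCast hq.le, ← Real.rpow_add_one hq.ne']; ring_nf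
  calc symphonicOperator (fun y => sumSq y ^ p) x
      = ∑ i, ∑ j, (8 * p ^ 3 * (q ^ (p - 1)) ^ 3 * x j ^ 2
          + 48 * p ^ 3 * (p - 1) * (q ^ (p - 1)) ^ 2 * q ^ (p - 2) * (x i ^ 2 * x j ^ 2)
          + 16 * p ^ 3 * (q ^ (p - 1)) ^ 3 * (if i = j then x i ^ 2 else 0)) := by
        simp only [symphonicOperator, pd1_sumSq_rpow p hx, pd1_pd1_sumSq_rpow p hx, if_true, ← hq_def]
        refine Finset.sum_congr rfl fun i _ => Finset.sum_congr rfl fun j _ => ?_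
        split_ifs with hij
        · subst hij; ring
        · ring
    _ = 8 * p ^ 3 * (6 * p + m - 4) * ((q ^ (p - 1)) ^ 3 * q) := by
        rw [sum_sum_quadratic, ← hpred]; ring
    _ = 8 * p ^ 3 * (6 * p + m - 4) * q ^ (3 * p - 2) := by rw [hcube]

lemma contDiff_sumSq {n : WithTop ℕ∞} : ContDiff ℝ n (sumSq (m := m)) := by
  unfold sumSq; fun_prop

lemma contDiffOn_sumSq_rpow (p : ℝ) {n : WithTop ℕ∞} :
    ContDiffOn ℝ n (fun y => sumSq y ^ p) {x : Fin m → ℝ | x ≠ 0} :=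
  contDiff_sumSq.contDiffOn.rpow_const_of_ne fun _ hx => (sumSq_pos hx).ne'

/-- The function `f(x₁,x₂) = (x₁² + x₂²)^{1/3}` is smooth on `ℝ² \ {0}` and satisfies the
symphonic equation `∑_{i,j} [∂²f/∂x_i² (∂f/∂x_j)² + 2 ∂_i f ∂_j f ∂²f/∂x_i∂x_j] = 0` there. -/
theorem symphonic_example_cube_root :
    let f : (Fin 2 → ℝ) → ℝ := fun y => (y 0 ^ 2 + y 1 ^ 2) ^ ((1 : ℝ) / 3)
    ContDiffOn ℝ (⊤ : ℕ∞) f {x : Fin 2 → ℝ | x ≠ 0}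
      ∧ ∀ x : Fin 2 → ℝ, x ≠ 0 →
          ∑ i, ∑ j, (pd1 (pd1 f i) i x * pd1 f j x ^ 2
            + 2 * pd1 f i x * pd1 f j x * pd1 (pd1 f i) j x) = 0 := by
  intro f
  have hf : f = fun y => sumSq y ^ ((1 : ℝ) / 3) := by
    funext y; simp [f, sumSq, Fin.sum_univ_two]
  refine ⟨hf ▸ contDiffOn_sumSq_rpow _, fun x hx => ?_⟩
  change symphonicOperator f x = 0
  rw [hf, symphonicOperator_sumSq_rpow _ hx]
  norm_num
end

section
/- Let φ : ℝ^m → ℝ^n be smooth. Then φ is a critical point of the symphonic energy, in the sense that for every smooth compactly supported v : ℝ^m → ℝ^n the derivative at t = 0 of t ↦ ∫_{ℝ^m}( ‖(φ+tv)^*h‖² − ‖φ^*h‖² ) dx vanishes, if and only if div σ_φ = 0 identically on ℝ^m. -/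
open scoped BigOperators

/-- Partial derivative `∂φ/∂x_i` of a map `φ : ℝ^m → ℝ^n`. -/
noncomputable def pd {m n : ℕ} (φ : (Fin m → ℝ) → Fin n → ℝ) (i : Fin m) (x : Fin m → ℝ) :
    Fin n → ℝ :=
  fderiv ℝ φ x (Pi.single i 1)

/-- Euclidean inner product on `ℝ^n`. -/
def inn {n : ℕ} (u v : Fin n → ℝ) : ℝ := ∑ k, u k * v k

/-!
The integrand is a polynomial of degree four in `t` whose linear coefficient is
`4 ∑ᵢ ⟨σ_φ(eᵢ), ∂ᵢv⟩`, so the first variation is `4 ∫ ∑ᵢ ⟨σ_φ(eᵢ), ∂ᵢv⟩`, which integration by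
parts turns into `-4 ∫ ⟨div σ_φ, v⟩`. By the fundamental lemma of the calculus of variations,
this vanishes for every test map `v` exactly when the continuous map `div σ_φ` vanishes.
-/

open MeasureTheory Function Matrix
open scoped ContDiff

section Inn

variable {n : ℕ}

lemma inn_eq_dotProduct (u w : Fin n → ℝ) : inn u w = u ⬝ᵥ w := rfl

lemma inn_comm (u w : Fin n → ℝ) : inn u w = inn w u := dotProduct_comm u w

lemma inn_sum_left {ι : Type*} (s : Finset ι) (u : ι → Fin n → ℝ) (w : Fin n → ℝ) :
    inn (∑ i ∈ s, u i) w = ∑ i ∈ s, inn (u i) w :=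
  sum_dotProduct s u w

noncomputable def innCLM : (Fin n → ℝ) →L[ℝ] (Fin n → ℝ) →L[ℝ] ℝ :=
  (dotProductBilin ℝ ℝ (m := Fin n) (A := ℝ)).toContinuousBilinearMap

lemma inn_add_smul (t : ℝ) (P Q R S : Fin n → ℝ) :
    inn (P + t • Q) (R + t • S) = inn P R + t * (inn P S + inn Q R) + t ^ 2 * inn Q S := by
  simp only [inn_eq_dotProduct, add_dotProduct, dotProduct_add, smul_dotProduct,
    dotProduct_smul, smul_eq_mul]
  ring

lemma ContDiff.inn {E : Type*} [NormedAddCommGroup E] [NormedSpace ℝ E] {k : ℕ∞ω}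
    {f g : E → Fin n → ℝ} (hf : ContDiff ℝ k f) (hg : ContDiff ℝ k g) :
    ContDiff ℝ k fun x => inn (f x) (g x) :=
  (innCLM.contDiff.comp hf).clm_apply hg

@[fun_prop]
lemma Continuous.inn {X : Type*} [TopologicalSpace X] {f g : X → Fin n → ℝ} (hf : Continuous f)
    (hg : Continuous g) : Continuous fun x => inn (f x) (g x) :=
  hf.dotProduct hg

lemma HasCompactSupport.inn_left {X : Type*} [TopologicalSpace X] {f g : X → Fin n → ℝ}
    (hf : HasCompactSupport f) : HasCompactSupport fun x => inn (f x) (g x) :=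
  hf.mono <| support_subset_iff'.2 fun x hx => by simp [notMem_support.1 hx, inn]

lemma HasCompactSupport.inn_right {X : Type*} [TopologicalSpace X] {f g : X → Fin n → ℝ}
    (hg : HasCompactSupport g) : HasCompactSupport fun x => inn (f x) (g x) :=
  hg.mono <| support_subset_iff'.2 fun x hx => by simp [notMem_support.1 hx, inn]

end Inn

section PartialDerivative

variable {m n : ℕ} {φ v : (Fin m → ℝ) → Fin n → ℝ}

lemma ContDiff.pd {k : ℕ∞ω} (hφ : ContDiff ℝ (k + 1) φ) (i : Fin m) :
    ContDiff ℝ k (pd φ i) :=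
  (hφ.fderiv_right le_rfl).clm_apply contDiff_const

lemma ContDiff.continuous_pd (hφ : ContDiff ℝ 1 φ) (i : Fin m) :
    Continuous (_root_.pd φ i) :=
  (hφ.pd (k := 0) i).continuous

lemma HasCompactSupport.pd (hv : HasCompactSupport v) (i : Fin m) :
    HasCompactSupport (pd v i) :=
  hv.fderiv_apply ℝ _

lemma pd_add_smul (hφ : Differentiable ℝ φ) (hv : Differentiable ℝ v) (t : ℝ) (i : Fin m)
    (x : Fin m → ℝ) : pd (fun y => φ y + t • v y) i x = pd φ i x + t • pd v i x := by
  rw [_root_.pd, fderiv_fun_add (g := fun y => t • v y) (hφ x) ((hv x).const_smul t),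
    fderiv_fun_const_smul (hv x) t]
  rfl

lemma integral_inn_pd_eq_neg {f : (Fin m → ℝ) → Fin n → ℝ} (hf : ContDiff ℝ 1 f)
    (hv : ContDiff ℝ 1 v) (hvs : HasCompactSupport v) (i : Fin m) :
    ∫ x, inn (f x) (pd v i x) = -∫ x, inn (pd f i x) (v x) := by
  refine integral_bilinear_fderiv_right_eq_neg_left_of_integrable (B := innCLM)
    ?_ ?_ ?_ (fun x _ => hf.differentiable one_ne_zero x)
    (fun x _ => hv.differentiable one_ne_zero x)
  · exact ((hf.continuous_pd i).inn hv.continuous).integrable_of_hasCompactSupport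
      hvs.inn_right
  · exact (hf.continuous.inn (hv.continuous_pd i)).integrable_of_hasCompactSupport
      (hvs.pd i).inn_right
  · exact (hf.continuous.inn hv.continuous).integrable_of_hasCompactSupport hvs.inn_right

end PartialDerivative

section Variation

variable {X ι : Type*} [MeasurableSpace X] {μ : Measure X}

lemma hasDerivAt_integral_quartic {p₁ p₂ p₃ p₄ : X → ℝ} (h₁ : Integrable p₁ μ)
    (h₂ : Integrable p₂ μ) (h₃ : Integrable p₃ μ) (h₄ : Integrable p₄ μ) :
    HasDerivAt (fun t => ∫ x, t * p₁ x + t ^ 2 * p₂ x + t ^ 3 * p₃ x + t ^ 4 * p₄ x ∂μ)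
      (∫ x, p₁ x ∂μ) 0 := by
  have hpoly : (fun t => ∫ x, t * p₁ x + t ^ 2 * p₂ x + t ^ 3 * p₃ x + t ^ 4 * p₄ x ∂μ) =
      fun t => t * ∫ x, p₁ x ∂μ + t ^ 2 * ∫ x, p₂ x ∂μ + t ^ 3 * ∫ x, p₃ x ∂μ +
        t ^ 4 * ∫ x, p₄ x ∂μ := by
    funext t
    rw [integral_add (by fun_prop) (by fun_prop), integral_add (by fun_prop) (by fun_prop),
      integral_add (by fun_prop) (by fun_prop)]
    simp only [integral_const_mul]
  rw [hpoly]
  refine (((((hasDerivAt_id' (x := (0 : ℝ))).mul_const (∫ x, p₁ x ∂μ)).fun_add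
    ((hasDerivAt_pow 2 (0 : ℝ)).mul_const (∫ x, p₂ x ∂μ))).fun_add
    ((hasDerivAt_pow 3 (0 : ℝ)).mul_const (∫ x, p₃ x ∂μ))).fun_add
    ((hasDerivAt_pow 4 (0 : ℝ)).mul_const (∫ x, p₄ x ∂μ))).congr_deriv ?_
  simp

variable [TopologicalSpace X] [OpensMeasurableSpace X] [IsFiniteMeasureOnCompacts μ] [Fintype ι]

lemma hasDerivAt_integral_sum_sq_sub {a b c : ι → X → ℝ} (ha : ∀ k, Continuous (a k))
    (hb : ∀ k, Continuous (b k)) (hc : ∀ k, Continuous (c k))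
    (hbs : ∀ k, HasCompactSupport (b k)) (hcs : ∀ k, HasCompactSupport (c k)) :
    HasDerivAt (fun t => ∫ x, ∑ k, ((a k x + t * b k x + t ^ 2 * c k x) ^ 2 - a k x ^ 2) ∂μ)
      (∫ x, ∑ k, 2 * a k x * b k x ∂μ) 0 := by
  have hint : ∀ p : ι → X → ℝ, (∀ k, Continuous (p k)) → (∀ k, HasCompactSupport (p k)) →
      Integrable (fun x => ∑ k, p k x) μ := fun p hp hps =>
    integrable_finsetSum _ fun k _ => (hp k).integrable_of_hasCompactSupport (hps k)
  have hexpand : ∀ t x, ∑ k, ((a k x + t * b k x + t ^ 2 * c k x) ^ 2 - a k x ^ 2) =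
      t * ∑ k, 2 * a k x * b k x + t ^ 2 * ∑ k, (b k x ^ 2 + 2 * a k x * c k x) +
        t ^ 3 * ∑ k, 2 * b k x * c k x + t ^ 4 * ∑ k, c k x ^ 2 := fun t x => by
    simp only [Finset.mul_sum, ← Finset.sum_add_distrib]
    exact Finset.sum_congr rfl fun k _ => by ring
  simp_rw [hexpand]
  exact hasDerivAt_integral_quartic
    (hint (fun k x => 2 * a k x * b k x) (by fun_prop) fun k => (hbs k).mul_left)
    (hint (fun k x => b k x ^ 2 + 2 * a k x * c k x) (by fun_prop)
      fun k => ((hbs k).comp_left (g := fun y : ℝ => y ^ 2) (by simp)).add (hcs k).mul_left)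
    (hint (fun k x => 2 * b k x * c k x) (by fun_prop) fun k => (hcs k).mul_left)
    (hint (fun k x => c k x ^ 2) (by fun_prop)
      fun k => (hcs k).comp_left (g := fun y : ℝ => y ^ 2) (by simp))

end Variation

section Symphonic

variable {m n : ℕ} {φ v : (Fin m → ℝ) → Fin n → ℝ}

noncomputable def symphonicDensity (φ : (Fin m → ℝ) → Fin n → ℝ) (x : Fin m → ℝ) : ℝ :=
  ∑ i, ∑ j, inn (pd φ i x) (pd φ j x) ^ 2

noncomputable def stress (φ : (Fin m → ℝ) → Fin n → ℝ) (i : Fin m) (x : Fin m → ℝ) :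
    Fin n → ℝ :=
  ∑ j, inn (pd φ i x) (pd φ j x) • pd φ j x

noncomputable def divStress (φ : (Fin m → ℝ) → Fin n → ℝ) (x : Fin m → ℝ) : Fin n → ℝ :=
  ∑ i, pd (stress φ i) i x

lemma ContDiff.stress {k : ℕ∞ω} (hφ : ContDiff ℝ (k + 1) φ) (i : Fin m) :
    ContDiff ℝ k (stress φ i) :=
  ContDiff.sum fun j _ => ((hφ.pd i).inn (hφ.pd j)).smul (hφ.pd j)

lemma continuous_divStress (hφ : ContDiff ℝ 2 φ) : Continuous (divStress φ) :=
  continuous_finsetSum _ fun i _ => (ContDiff.stress (k := 1) hφ i).continuous_pd i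

lemma symphonicDensity_add_smul_sub (hφ : Differentiable ℝ φ) (hv : Differentiable ℝ v) (t : ℝ)
    (x : Fin m → ℝ) :
    symphonicDensity (fun y => φ y + t • v y) x - symphonicDensity φ x =
      ∑ p : Fin m × Fin m, ((inn (pd φ p.1 x) (pd φ p.2 x) +
        t * (inn (pd φ p.1 x) (pd v p.2 x) + inn (pd v p.1 x) (pd φ p.2 x)) +
        t ^ 2 * inn (pd v p.1 x) (pd v p.2 x)) ^ 2 - inn (pd φ p.1 x) (pd φ p.2 x) ^ 2) := by
  simp only [symphonicDensity, pd_add_smul hφ hv, inn_add_smul, Fintype.sum_prod_type,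
    ← Finset.sum_sub_distrib]

lemma sum_inn_pd_mul_inn_pd_eq_inn_stress (x : Fin m → ℝ) :
    ∑ p : Fin m × Fin m, 2 * inn (pd φ p.1 x) (pd φ p.2 x) *
        (inn (pd φ p.1 x) (pd v p.2 x) + inn (pd v p.1 x) (pd φ p.2 x)) =
      4 * ∑ i, inn (stress φ i x) (pd v i x) := by
  have hstress : ∀ i, inn (stress φ i x) (pd v i x) =
      ∑ j, inn (pd φ i x) (pd φ j x) * inn (pd φ j x) (pd v i x) := fun i => by
    simp only [stress, inn_eq_dotProduct, sum_dotProduct, smul_dotProduct, smul_eq_mul]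
  have hsymm : ∑ i, ∑ j, inn (pd φ i x) (pd φ j x) * inn (pd φ i x) (pd v j x) =
      ∑ i, ∑ j, inn (pd φ i x) (pd φ j x) * inn (pd φ j x) (pd v i x) := by
    rw [Finset.sum_comm]
    exact Finset.sum_congr rfl fun i _ => Finset.sum_congr rfl fun j _ => by
      rw [inn_comm (pd φ j x) (pd φ i x)]
  have hcomm : ∑ i, ∑ j, inn (pd φ i x) (pd φ j x) * inn (pd v i x) (pd φ j x) =
      ∑ i, ∑ j, inn (pd φ i x) (pd φ j x) * inn (pd φ j x) (pd v i x) := by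
    simp only [inn_comm (pd v _ x)]
  calc _ = 2 * ∑ i, ∑ j, inn (pd φ i x) (pd φ j x) * inn (pd φ i x) (pd v j x) +
        2 * ∑ i, ∑ j, inn (pd φ i x) (pd φ j x) * inn (pd v i x) (pd φ j x) := by
        simp only [Fintype.sum_prod_type, Finset.mul_sum, ← Finset.sum_add_distrib]
        exact Finset.sum_congr rfl fun i _ => Finset.sum_congr rfl fun j _ => by ring
    _ = _ := by
        rw [hsymm, hcomm]
        simp only [hstress]
        ring

lemma integral_sum_inn_stress_pd (hφ : ContDiff ℝ 2 φ) (hv : ContDiff ℝ 1 v)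
    (hvs : HasCompactSupport v) :
    ∫ x, ∑ i, inn (stress φ i x) (pd v i x) = -∫ x, inn (divStress φ x) (v x) := by
  have hσ : ∀ i, ContDiff ℝ 1 (stress φ i) := fun i => ContDiff.stress (k := 1) hφ i
  simp only [divStress, inn_sum_left]
  rw [integral_finsetSum _ fun i _ => ((hσ i).continuous.inn (hv.continuous_pd i))
      |>.integrable_of_hasCompactSupport (hvs.pd i).inn_right,
    integral_finsetSum _ fun i _ => (((hσ i).continuous_pd i).inn hv.continuous)
      |>.integrable_of_hasCompactSupport hvs.inn_right, ← Finset.sum_neg_distrib]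
  exact Finset.sum_congr rfl fun i _ => integral_inn_pd_eq_neg (hσ i) hv hvs i

theorem hasDerivAt_integral_symphonicDensity_add_smul (hφ : ContDiff ℝ 2 φ)
    (hv : ContDiff ℝ 1 v) (hvs : HasCompactSupport v) :
    HasDerivAt
      (fun t : ℝ => ∫ x, symphonicDensity (fun y => φ y + t • v y) x - symphonicDensity φ x)
      (-4 * ∫ x, inn (divStress φ x) (v x)) 0 := by
  have hφ1 : ContDiff ℝ 1 φ := hφ.of_le one_le_two
  have hpdφ : ∀ i, Continuous (pd φ i) := hφ1.continuous_pd
  have hpdv : ∀ i, Continuous (pd v i) := hv.continuous_pd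
  simp_rw [symphonicDensity_add_smul_sub (hφ1.differentiable one_ne_zero)
    (hv.differentiable one_ne_zero)]
  have hbs : ∀ p : Fin m × Fin m, HasCompactSupport fun x =>
      inn (pd φ p.1 x) (pd v p.2 x) + inn (pd v p.1 x) (pd φ p.2 x) :=
    fun p => (hvs.pd p.2).inn_right.add (hvs.pd p.1).inn_left
  have hderiv := hasDerivAt_integral_sum_sq_sub (μ := volume) (ι := Fin m × Fin m)
    (a := fun p x => inn (pd φ p.1 x) (pd φ p.2 x))
    (b := fun p x => inn (pd φ p.1 x) (pd v p.2 x) + inn (pd v p.1 x) (pd φ p.2 x))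
    (c := fun p x => inn (pd v p.1 x) (pd v p.2 x))
    (fun p => (hpdφ p.1).inn (hpdφ p.2))
    (fun p => ((hpdφ p.1).inn (hpdv p.2)).add ((hpdv p.1).inn (hpdφ p.2)))
    (fun p => (hpdv p.1).inn (hpdv p.2)) hbs (fun p => (hvs.pd p.2).inn_right)
  refine hderiv.congr_deriv ?_
  simp_rw [sum_inn_pd_mul_inn_pd_eq_inn_stress, integral_const_mul,
    integral_sum_inn_stress_pd hφ hv hvs]
  ring

end Symphonic

lemma eq_zero_of_forall_integral_inn_eq_zero {E : Type*} [NormedAddCommGroup E]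
    [NormedSpace ℝ E] [FiniteDimensional ℝ E] [MeasurableSpace E] [BorelSpace E]
    {μ : Measure E} [μ.IsAddHaarMeasure] {n : ℕ} {g : E → Fin n → ℝ} (hg : Continuous g)
    (h : ∀ v : E → Fin n → ℝ, ContDiff ℝ ∞ v → HasCompactSupport v →
      ∫ x, inn (g x) (v x) ∂μ = 0) :
    g = 0 := by
  funext x k
  have hk : Continuous fun x => g x k := (continuous_apply k).comp hg
  have hae : ∀ᵐ x ∂μ, g x k = 0 :=
    ae_eq_zero_of_integral_contDiff_smul_eq_zero hk.locallyIntegrable fun ψ hψ hψs => by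
      simpa [inn_eq_dotProduct, dotProduct_smul, dotProduct_single, mul_comm] using
        h (fun x => ψ x • Pi.single k 1) (hψ.smul contDiff_const) hψs.smul_right
  exact congrFun ((hk.ae_eq_iff_eq μ continuous_const).1 hae) x

/-- A smooth map `φ : ℝ^m → ℝ^n` is a critical point of the symphonic energy (the first
variation along every smooth compactly supported `v` vanishes at `t = 0`) if and only if
`div σ_φ = 0` identically on `ℝ^m`. -/
theorem symphonic_iff_critical (m n : ℕ) (φ : (Fin m → ℝ) → Fin n → ℝ)
    (hφ : ContDiff ℝ (⊤ : ℕ∞) φ) :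
    (∀ v : (Fin m → ℝ) → Fin n → ℝ, ContDiff ℝ (⊤ : ℕ∞) v → HasCompactSupport v →
        HasDerivAt (fun t : ℝ => ∫ x : Fin m → ℝ,
            ((∑ i, ∑ j,
                inn (pd (fun y => φ y + t • v y) i x) (pd (fun y => φ y + t • v y) j x) ^ 2)
              - ∑ i, ∑ j, inn (pd φ i x) (pd φ j x) ^ 2)) 0 0)
      ↔ ∀ x : Fin m → ℝ,
          (∑ i, pd (fun y => ∑ j, inn (pd φ i y) (pd φ j y) • pd φ j y) i x) = 0 := by
  have hφ2 : ContDiff ℝ 2 φ := hφ.of_le ENat.LEInfty.out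
  have hvar : ∀ v : (Fin m → ℝ) → Fin n → ℝ, ContDiff ℝ ∞ v → HasCompactSupport v →
      HasDerivAt (fun t : ℝ => ∫ x, symphonicDensity (fun y => φ y + t • v y) x -
        symphonicDensity φ x) (-4 * ∫ x, inn (divStress φ x) (v x)) 0 := fun v hv hvs =>
    hasDerivAt_integral_symphonicDensity_add_smul hφ2 (hv.of_le ENat.LEInfty.out) hvs
  constructor
  · intro hcrit
    refine congrFun (eq_zero_of_forall_integral_inn_eq_zero (μ := volume) (g := divStress φ)
      (continuous_divStress hφ2) fun v hv hvs => ?_)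
    simpa using (hvar v hv hvs).unique (hcrit v hv hvs)
  · intro hdiv v hv hvs
    have hzero : divStress φ = 0 := funext hdiv
    refine (hvar v hv hvs).congr_deriv ?_
    simp [hzero, inn]
end

section
/- Let γ : (0,∞) → ℝ be given by γ(t) = t^{15/11}. Then γ is smooth on (0,∞) and for every t > 0 it satisfies the bi-symphonic curve equation 14·γ'(t)²·γ''(t)³ + 17·γ'(t)³·γ''(t)·γ'''(t) + 2·γ'(t)⁴·γ''''(t) = 0, while γ'(t)²·γ''(t) ≠ 0 for every t > 0, so γ is not symphonic at any point. -/
/-!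
Every derivative of `t ↦ t ^ r` is a constant multiple of a power of `t`, and each of the three
terms of the bi-symphonic equation is homogeneous of degree `5r - 8` in `t`. The equation for
`t ^ r` therefore reduces to the vanishing of a polynomial in `r`, namely
`r⁵ (r - 1) (11r - 15) (3r - 4)`, which has `r = 15/11` as a root, whereas
`γ'² γ'' = r³ (r - 1) t^{3r - 4}` vanishes nowhere on `(0, ∞)` for that `r`.
-/

open Real

noncomputable def biSymphonicExpr (γ : ℝ → ℝ) (t : ℝ) : ℝ :=
  14 * deriv γ t ^ 2 * deriv^[2] γ t ^ 3 + 17 * deriv γ t ^ 3 * deriv^[2] γ t * deriv^[3] γ t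
    + 2 * deriv γ t ^ 4 * deriv^[4] γ t

section RpowDerivatives

variable {t : ℝ} (r : ℝ)

lemma deriv_rpow_const_of_ne_zero (ht : t ≠ 0) :
    deriv (fun x : ℝ ↦ x ^ r) t = r * (t ^ r / t) := by
  rw [Real.deriv_rpow_const, rpow_sub_one ht]

lemma iter_deriv_rpow_const_of_ne_zero (ht : t ≠ 0) (k : ℕ) :
    deriv^[k] (fun x : ℝ ↦ x ^ r) t = (descPochhammer ℝ k).eval r * (t ^ r / t ^ k) := by
  rw [iter_deriv_rpow_const, rpow_sub_natCast ht]

lemma deriv_rpow_sq_mul_iter_deriv_two (ht : t ≠ 0) :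
    deriv (fun x : ℝ ↦ x ^ r) t ^ 2 * deriv^[2] (fun x : ℝ ↦ x ^ r) t
      = r ^ 3 * (r - 1) * ((t ^ r) ^ 3 / t ^ 4) := by
  rw [deriv_rpow_const_of_ne_zero r ht, iter_deriv_rpow_const_of_ne_zero r ht]
  simp only [descPochhammer_succ_right, descPochhammer_zero, Nat.cast_zero, Nat.cast_one,
    sub_zero, one_mul, Polynomial.eval_mul, Polynomial.eval_X, Polynomial.eval_sub,
    Polynomial.eval_one]
  field_simp

lemma biSymphonicExpr_rpow (ht : t ≠ 0) :
    biSymphonicExpr (fun x ↦ x ^ r) t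
      = r ^ 5 * (r - 1) * (11 * r - 15) * (3 * r - 4) * ((t ^ r) ^ 5 / t ^ 8) := by
  simp only [biSymphonicExpr, deriv_rpow_const_of_ne_zero r ht,
    iter_deriv_rpow_const_of_ne_zero r ht, descPochhammer_succ_right, descPochhammer_zero,
    Nat.cast_zero, Nat.cast_one, Nat.cast_ofNat,
    sub_zero, one_mul, Polynomial.eval_mul, Polynomial.eval_X, Polynomial.eval_sub,
    Polynomial.eval_one, Polynomial.eval_ofNat]
  field_simp
  ring

end RpowDerivatives

/-- The curve `γ(t) = t^{15/11}` on `(0,∞)` is smooth there, satisfies the bi-symphonic curve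
equation `14 γ'² (γ'')³ + 17 γ'³ γ'' γ''' + 2 γ'⁴ γ'''' = 0` at every `t > 0`, and is not
symphonic at any point since `γ'² γ'' ≠ 0`. -/
theorem biSymphonic_curve_fifteen_elevenths :
    let γ : ℝ → ℝ := fun t => t ^ ((15 : ℝ) / 11)
    ContDiffOn ℝ (⊤ : ℕ∞) γ (Set.Ioi 0)
      ∧ ∀ t : ℝ, 0 < t →
          (14 * (deriv γ t) ^ 2 * (deriv^[2] γ t) ^ 3
              + 17 * (deriv γ t) ^ 3 * deriv^[2] γ t * deriv^[3] γ t
              + 2 * (deriv γ t) ^ 4 * deriv^[4] γ t = 0)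
            ∧ (deriv γ t) ^ 2 * deriv^[2] γ t ≠ 0 := by
  intro γ
  refine ⟨fun t ht ↦ (contDiffAt_rpow_const_of_ne (ne_of_gt ht)).contDiffWithinAt,
    fun t ht ↦ ⟨?_, ?_⟩⟩
  · change biSymphonicExpr γ t = 0
    rw [biSymphonicExpr_rpow _ ht.ne']
    norm_num
  · rw [deriv_rpow_sq_mul_iter_deriv_two _ ht.ne']
    have hγ_pos : 0 < t ^ ((15 : ℝ) / 11) := rpow_pos_of_pos ht _
    positivity
end

section
/- Let a ∈ ℝ and let γ_a : (0,∞) → ℝ be given by γ_a(t) = t^a. Then for every t > 0, 14·γ_a'(t)²·γ_a''(t)³ + 17·γ_a'(t)³·γ_a''(t)·γ_a'''(t) + 2·γ_a'(t)⁴·γ_a''''(t) = a⁵(a−1)(33a² − 89a + 60)·t^{5a−8}. Consequently, γ_a satisfies the bi-symphonic curve equation at every t > 0 if and only if a ∈ {0, 1, 4/3, 15/11}. -/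
/-!
The `k`-th derivative of `t ↦ t ^ a` is `a (a - 1) ⋯ (a - k + 1) t ^ (a - k)`, so each of the
three terms of the bi-symphonic expression is a polynomial in `a` times `t ^ (5a - 8)`.
Evaluating at `t = 1`, the equation holds on `(0, ∞)` iff the polynomial
`a⁵ (a - 1) (33a² - 89a + 60) = 33 a⁵ (a - 1) (a - 4/3) (a - 15/11)` vanishes.
-/

open Real

noncomputable def biSymphonic (γ : ℝ → ℝ) (t : ℝ) : ℝ :=
  14 * (deriv γ t) ^ 2 * (deriv^[2] γ t) ^ 3
    + 17 * (deriv γ t) ^ 3 * deriv^[2] γ t * deriv^[3] γ t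
    + 2 * (deriv γ t) ^ 4 * deriv^[4] γ t

theorem biSymphonic_rpow (a : ℝ) {t : ℝ} (ht : 0 < t) :
    biSymphonic (fun x => x ^ a) t
      = a ^ 5 * (a - 1) * (33 * a ^ 2 - 89 * a + 60) * t ^ (5 * a - 8) := by
  have hpow : t ^ (5 * a - 8) = (t ^ a) ^ 5 / t ^ 8 := by
    rw [rpow_sub ht, show 5 * a = a * (5 : ℕ) by push_cast; ring, rpow_mul_natCast ht.le,
      rpow_ofNat]
  simp only [biSymphonic, Real.deriv_rpow_const, iter_deriv_rpow_const, descPochhammer_succ_right,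
    descPochhammer_zero, Polynomial.eval_mul, Polynomial.eval_sub, Polynomial.eval_X,
    Polynomial.eval_one, Polynomial.eval_natCast, hpow, rpow_sub ht, rpow_natCast, rpow_one]
  field_simp
  push_cast
  ring

theorem biSymphonic_coeff_eq_zero_iff (a : ℝ) :
    a ^ 5 * (a - 1) * (33 * a ^ 2 - 89 * a + 60) = 0 ↔ a ∈ ({0, 1, 4 / 3, 15 / 11} : Set ℝ) := by
  have hfac : 33 * a ^ 2 - 89 * a + 60 = 33 * ((a - 4 / 3) * (a - 15 / 11)) := by ring
  simp only [hfac, mul_eq_zero, sub_eq_zero, Set.mem_insert_iff, Set.mem_singleton_iff]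
  norm_num
  tauto

/-- For `γ_a(t) = t^a` on `(0,∞)`, the bi-symphonic expression equals
`a⁵(a−1)(33a² − 89a + 60) t^{5a−8}` for every `t > 0`; consequently `γ_a` satisfies the
bi-symphonic curve equation on `(0,∞)` iff `a ∈ {0, 1, 4/3, 15/11}`. -/
theorem biSymphonic_power_curves (a : ℝ) :
    let γ : ℝ → ℝ := fun t => t ^ a
    (∀ t : ℝ, 0 < t →
        14 * (deriv γ t) ^ 2 * (deriv^[2] γ t) ^ 3
            + 17 * (deriv γ t) ^ 3 * deriv^[2] γ t * deriv^[3] γ t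
            + 2 * (deriv γ t) ^ 4 * deriv^[4] γ t
          = a ^ 5 * (a - 1) * (33 * a ^ 2 - 89 * a + 60) * t ^ (5 * a - 8))
      ∧ ((∀ t : ℝ, 0 < t →
            14 * (deriv γ t) ^ 2 * (deriv^[2] γ t) ^ 3
              + 17 * (deriv γ t) ^ 3 * deriv^[2] γ t * deriv^[3] γ t
              + 2 * (deriv γ t) ^ 4 * deriv^[4] γ t = 0)
          ↔ a ∈ ({0, 1, 4 / 3, 15 / 11} : Set ℝ)) := by
  change (∀ t : ℝ, 0 < t → biSymphonic (· ^ a) t = _)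
    ∧ ((∀ t : ℝ, 0 < t → biSymphonic (· ^ a) t = 0) ↔ _)
  refine ⟨fun t ht => biSymphonic_rpow a ht, ?_⟩
  rw [← biSymphonic_coeff_eq_zero_iff]
  constructor
  · intro h
    simpa only [biSymphonic_rpow a one_pos, one_rpow, mul_one] using h 1 one_pos
  · intro hcoeff t ht
    rw [biSymphonic_rpow a ht, hcoeff, zero_mul]
end
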